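/- Let F be the set of functions V → V (V = {0, 1/2, 1}) generated from the identity function by closure under pointwise negation (¬p = 1-p), pointwise max (∨), pointwise min (∧), and composition with ◇₁ (◇₁: 1↦1/2, 1/2↦0, 0↦0). Then the function h : V → V defined by h(1) = 1, h(1/2) = 0, h(0) = 1/2 does not belong to F. -/

import Mathlib

/-- The three Kleene truth values 0, 1/2, 1. -/
inductive Tv | zero | half | one
deriving DecidableEq

/-- Kleene negation ¬p = 1 - p. -/
def tneg : Tv → Tv
  | .zero => .one | .half => .half | .one => .zero

/-- Max with respect to 0 < 1/2 < 1 (disjunction). -/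
def tmax : Tv → Tv → Tv
  | .one, _ => .one | _, .one => .one
  | .half, _ => .half | _, .half => .half
  | .zero, .zero => .zero

/-- Min with respect to 0 < 1/2 < 1 (conjunction). -/
def tmin : Tv → Tv → Tv
  | .zero, _ => .zero | _, .zero => .zero
  | .half, _ => .half | _, .half => .half
  | .one, .one => .one

/-- ◇₁ : 1 ↦ 1/2, 1/2 ↦ 0, 0 ↦ 0. -/
def td1 : Tv → Tv
  | .one => .half | .half => .zero | .zero => .zero

/-- The clone of unary functions generated from the identity under pointwise
    negation, max, min, and composition with ◇₁ (formulas of K₃ˢ + ◇₁ in one variable). -/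
inductive InF : (Tv → Tv) → Prop
  | id : InF id
  | neg : ∀ f, InF f → InF (fun p => tneg (f p))
  | max : ∀ f g, InF f → InF g → InF (fun p => tmax (f p) (g p))
  | min : ∀ f g, InF f → InF g → InF (fun p => tmin (f p) (g p))
  | dia : ∀ f, InF f → InF (fun p => td1 (f p))

/-!
Every generator is non-expansive for the usual distance on `{0, 1/2, 1}`: negation is an
isometry, `max` and `min` are non-expansive in each argument, and `◇₁` moves each step of
size `1/2` by at most `1/2`. Hence every member of the clone maps values at distance `1/2`
to values at distance at most `1/2`, whereas `h` sends `1/2` and `1` to `0` and `1`.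
-/

instance : Fintype Tv :=
  ⟨{.zero, .half, .one}, by intro x; cases x <;> simp⟩

namespace Tv

/-- `Near x y` means `|x - y| ≤ 1/2`. -/
def Near : Tv → Tv → Prop
  | .zero, .one | .one, .zero => False
  | _, _ => True

instance : DecidableRel Near := fun x y => by
  cases x <;> cases y <;> unfold Near <;> infer_instance

theorem near_tneg : ∀ x y, Near x y → Near (tneg x) (tneg y) := by decide

theorem near_tmax : ∀ x y x' y', Near x y → Near x' y' → Near (tmax x x') (tmax y y') := by
  decide

theorem near_tmin : ∀ x y x' y', Near x y → Near x' y' → Near (tmin x x') (tmin y y') := by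
  decide

theorem near_td1 : ∀ x y, Near x y → Near (td1 x) (td1 y) := by decide

end Tv

theorem InF.preserves {R : Tv → Tv → Prop}
    (hneg : ∀ x y, R x y → R (tneg x) (tneg y))
    (hmax : ∀ x y x' y', R x y → R x' y' → R (tmax x x') (tmax y y'))
    (hmin : ∀ x y x' y', R x y → R x' y' → R (tmin x x') (tmin y y'))
    (hdia : ∀ x y, R x y → R (td1 x) (td1 y))
    {f : Tv → Tv} (hf : InF f) {x y : Tv} (hxy : R x y) : R (f x) (f y) := by
  induction hf with
  | id => exact hxy
  | neg _ _ ih => exact hneg _ _ ih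
  | max _ _ _ _ ihf ihg => exact hmax _ _ _ _ ihf ihg
  | min _ _ _ _ ihf ihg => exact hmin _ _ _ _ ihf ihg
  | dia _ _ ih => exact hdia _ _ ih

theorem InF.near {f : Tv → Tv} (hf : InF f) {x y : Tv} (hxy : x.Near y) : (f x).Near (f y) :=
  hf.preserves Tv.near_tneg Tv.near_tmax Tv.near_tmin Tv.near_td1 hxy

theorem not_definable_with_d1 :
    ¬ InF (fun p => match p with | .one => .one | .half => .zero | .zero => .half) :=
  fun h => h.near (x := .half) (y := .one) trivial
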